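/- arXiv:2605.29222 — 5 statements merged into one kernel-verified Lean document; each statement's English description precedes it below -/
import Mathlib

section
/- Let Π_1,...,Π_K be [0,1]-valued random variables each marginally Uniform(0,1). Then for all t ∈ (0,1), P((1/K)∑_{k=1}^K Π_k ≤ t) ≤ 2t, i.e., twice the average of arbitrarily dependent uniform p-values is again a valid p-value. -/
open MeasureTheory Set

lemma aux_lintegral_bound (t : ℝ) (ht0 : 0 < t) (ht1 : t < 1) :
    ∫⁻ x in Set.Icc (0:ℝ) 1, ENNReal.ofReal (max 0 (1 - x / (2*t))) ∂volume
      ≤ ENNReal.ofReal t := by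
  set c : ℝ := 2 * t with hc_def
  have hc : 0 < c := by positivity
  set f : ℝ → ℝ := fun x => max 0 (1 - x / c) with hf_def
  have hf_cont : Continuous f := continuous_const.max (continuous_const.sub (continuous_id.div_const c))
  have hf_int : IntegrableOn f (Set.Icc (0:ℝ) 1) volume := hf_cont.integrableOn_Icc
  have hf_nonneg : ∀ x, 0 ≤ f x := fun x => le_max_left _ _
  rw [← MeasureTheory.ofReal_integral_eq_lintegral_ofReal hf_int
    (Filter.Eventually.of_forall hf_nonneg)]
  apply ENNReal.ofReal_le_ofReal
  have hlin : ∀ a b : ℝ, ∫ x in a..b, (1 - x / c) = (b - a) - (b^2 - a^2)/2/c := by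
    intro a b
    rw [intervalIntegral.integral_sub intervalIntegrable_const
      ((continuous_id'.div_const c).intervalIntegrable a b)]
    rw [intervalIntegral.integral_div, integral_id, intervalIntegral.integral_const]
    simp only [smul_eq_mul, mul_one]
  by_cases hcase : c ≤ 1
  · -- t ≤ 1/2
    have hsplit : Set.Icc (0:ℝ) 1 = Set.Icc 0 c ∪ Set.Ioc c 1 :=
      (Set.Icc_union_Ioc_eq_Icc hc.le hcase).symm
    have hdisj : Disjoint (Set.Icc (0:ℝ) c) (Set.Ioc c 1) := by
      rw [Set.disjoint_left]
      rintro x ⟨_, hxc⟩ ⟨hcx, _⟩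
      exact absurd hxc (not_le.mpr hcx)
    rw [hsplit, MeasureTheory.setIntegral_union hdisj measurableSet_Ioc
      (hf_cont.integrableOn_Icc) (hf_cont.integrableOn_Ioc)]
    have h2 : ∫ x in Set.Ioc c 1, f x = 0 := by
      rw [MeasureTheory.setIntegral_congr_fun measurableSet_Ioc
        (g := fun _ => (0:ℝ)) ?_]
      · simp
      · intro x hx
        simp only [hf_def]
        rw [max_eq_left]
        have : 1 ≤ x / c := (one_le_div hc).mpr hx.1.le
        linarith
    have h1 : ∫ x in Set.Icc (0:ℝ) c, f x = t := by
      rw [MeasureTheory.setIntegral_congr_fun measurableSet_Icc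
        (g := fun x => 1 - x / c) ?_]
      · rw [MeasureTheory.integral_Icc_eq_integral_Ioc,
          ← intervalIntegral.integral_of_le hc.le, hlin]
        field_simp [hc_def]
        ring
      · intro x hx
        simp only [hf_def]
        rw [max_eq_right]
        have : x / c ≤ 1 := (div_le_one hc).mpr hx.2
        linarith
    rw [h1, h2]; linarith
  · -- t > 1/2
    push_neg at hcase
    have h1 : ∫ x in Set.Icc (0:ℝ) 1, f x = 1 - 1/2/c := by
      rw [MeasureTheory.setIntegral_congr_fun measurableSet_Icc
        (g := fun x => 1 - x / c) ?_]
      · rw [MeasureTheory.integral_Icc_eq_integral_Ioc,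
          ← intervalIntegral.integral_of_le (by norm_num : (0:ℝ) ≤ 1), hlin]
        ring
      · intro x hx
        simp only [hf_def]
        rw [max_eq_right]
        have : x / c ≤ 1 := (div_le_one hc).mpr (hx.2.trans hcase.le)
        linarith
    rw [h1]
    have h1' : 1 - 1/2/c ≤ t ↔ 1 - t ≤ 1/2/c := by constructor <;> intro <;> linarith
    rw [h1', div_div, le_div_iff₀ (by positivity : (0:ℝ) < 2*c)]
    nlinarith [sq_nonneg (c - 1)]

/-- Twice the average of arbitrarily dependent uniform p-values is a valid p-value:
`P((1/K) ∑ Π_k ≤ t) ≤ 2t` for all `t ∈ (0,1)`. -/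
theorem twice_average_valid
    {Ω : Type*} [MeasurableSpace Ω] (μ : Measure Ω) [IsProbabilityMeasure μ]
    (K : ℕ) (hK : 0 < K) (P : Fin K → Ω → ℝ)
    (hmeas : ∀ k, Measurable (P k))
    (h01 : ∀ k ω, P k ω ∈ Set.Icc (0:ℝ) 1)
    (hunif : ∀ k, Measure.map (P k) μ = volume.restrict (Set.Icc (0:ℝ) 1)) :
    ∀ t ∈ Set.Ioo (0:ℝ) 1,
      μ {ω | (1 / (K:ℝ)) * ∑ k, P k ω ≤ t} ≤ ENNReal.ofReal (2 * t) := by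
  rintro t ⟨ht0, ht1⟩
  set c : ℝ := 2 * t with hc_def
  have hc : 0 < c := by positivity
  set f : ℝ → ℝ := fun x => max 0 (1 - x / c) with hf_def
  have hf_cont : Continuous f := continuous_const.max (continuous_const.sub (continuous_id.div_const c))
  have hf_meas : Measurable f := hf_cont.measurable
  have hf_nonneg : ∀ x, 0 ≤ f x := fun x => le_max_left _ _
  have hKpos : (0:ℝ) < K := Nat.cast_pos.mpr hK
  -- the event is contained in a Markov-type event
  have hsub : {ω | (1 / (K:ℝ)) * ∑ k, P k ω ≤ t}
      ⊆ {ω | ENNReal.ofReal ((K:ℝ)/2) ≤ ENNReal.ofReal (∑ k, f (P k ω))} := by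
    intro ω hω
    simp only [Set.mem_setOf_eq] at hω ⊢
    apply ENNReal.ofReal_le_ofReal
    have hsum : ∑ k, P k ω ≤ (K:ℝ) * t := by
      rw [one_div, inv_mul_le_iff₀ hKpos] at hω
      linarith
    have key : ∑ k, (1 - P k ω / c) ≤ ∑ k, f (P k ω) :=
      Finset.sum_le_sum fun k _ => le_max_right _ _
    have hexp : ∑ k, (1 - P k ω / c) = (K:ℝ) - (∑ k, P k ω) / c := by
      rw [Finset.sum_sub_distrib, Finset.sum_const, Finset.card_univ,
        Fintype.card_fin, ← Finset.sum_div]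
      simp
    have hdiv : (∑ k, P k ω) / c ≤ ((K:ℝ) * t) / c := by gcongr
    have : (K:ℝ)/2 ≤ ∑ k, (1 - P k ω / c) := by
      rw [hexp]
      have : ((K:ℝ) * t) / c = (K:ℝ)/2 := by
        rw [hc_def]; field_simp
      linarith [hdiv, this]
    linarith
  calc μ {ω | (1 / (K:ℝ)) * ∑ k, P k ω ≤ t}
      ≤ μ {ω | ENNReal.ofReal ((K:ℝ)/2) ≤ ENNReal.ofReal (∑ k, f (P k ω))} :=
        measure_mono hsub
    _ ≤ (∫⁻ ω, ENNReal.ofReal (∑ k, f (P k ω)) ∂μ) / ENNReal.ofReal ((K:ℝ)/2) := by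
        apply MeasureTheory.meas_ge_le_lintegral_div
        · exact ((Finset.univ.measurable_sum fun k _ => hf_meas.comp (hmeas k)).ennreal_ofReal).aemeasurable
        · simp only [ne_eq, ENNReal.ofReal_eq_zero, not_le]
          positivity
        · exact ENNReal.ofReal_ne_top
    _ ≤ (ENNReal.ofReal ((K:ℝ) * t)) / ENNReal.ofReal ((K:ℝ)/2) := by
        apply ENNReal.div_le_div_right
        have hrw : ∀ ω, ENNReal.ofReal (∑ k, f (P k ω)) = ∑ k, ENNReal.ofReal (f (P k ω)) := by
          intro ω
          exact ENNReal.ofReal_sum_of_nonneg fun k _ => hf_nonneg _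
        rw [lintegral_congr hrw,
          MeasureTheory.lintegral_finset_sum (f := fun k ω => ENNReal.ofReal (f (P k ω))) _
            (fun k _ => ((hf_meas.comp (hmeas k)).ennreal_ofReal : Measurable fun ω => ENNReal.ofReal (f (P k ω))))]
        have hterm : ∀ k : Fin K,
            ∫⁻ ω, ENNReal.ofReal (f (P k ω)) ∂μ ≤ ENNReal.ofReal t := by
          intro k
          rw [← MeasureTheory.lintegral_map hf_meas.ennreal_ofReal (hmeas k), hunif k]
          exact aux_lintegral_bound t ht0 ht1
        calc ∑ k : Fin K, ∫⁻ ω, ENNReal.ofReal (f (P k ω)) ∂μ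
            ≤ ∑ _k : Fin K, ENNReal.ofReal t := Finset.sum_le_sum fun k _ => hterm k
          _ = K * ENNReal.ofReal t := by
              rw [Finset.sum_const, Finset.card_univ, Fintype.card_fin, nsmul_eq_mul]
          _ = ENNReal.ofReal ((K:ℝ) * t) := by
              rw [ENNReal.ofReal_mul (by positivity), ENNReal.ofReal_natCast]
    _ ≤ ENNReal.ofReal (2 * t) := by
        apply ENNReal.div_le_of_le_mul
        rw [← ENNReal.ofReal_mul (by positivity : (0:ℝ) ≤ 2 * t)]
        apply ENNReal.ofReal_le_ofReal
        nlinarith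
end

section
/- Let Π_1,...,Π_K be [0,1]-valued random variables each marginally Uniform(0,1). Then for all t ∈ (0,1), P((∏_{k=1}^K Π_k)^{1/K} ≤ t) ≤ e·t, i.e., e times the geometric mean of arbitrarily dependent uniform p-values is a valid p-value. -/
/-!
Put `c = e·t`. When `c ≤ 1`, `∫₀¹ (log c - log u)₊ du = c`, so for uniform `Π_k` each
`(log c - log Π_k)₊` has mean `c`. Since `log c = 1 + log t`, on the event that the geometric
mean is at most `t` the average of these `K` variables is at least `1`, and Markov's inequality
applied to their sum bounds the probability of the event by `c`. For `c ≥ 1` there is nothing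
to prove.
-/

open MeasureTheory Set
open scoped ENNReal

open Real in
theorem lintegral_ofReal_log_sub_log {c : ℝ} (hc0 : 0 < c) (hc1 : c ≤ 1) :
    ∫⁻ u in Icc 0 1, ENNReal.ofReal (log c - log u) = ENNReal.ofReal c := by
  have hvanish : ∫⁻ u in Ioc c 1, ENNReal.ofReal (log c - log u) = 0 := by
    rw [← lintegral_zero (μ := volume.restrict (Ioc c 1))]
    refine setLIntegral_congr_fun measurableSet_Ioc fun u hu => ?_
    simpa using log_le_log hc0 hu.1.le
  have hint : ∫ u in (0)..c, (log c - log u) = c := by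
    rw [intervalIntegral.integral_sub intervalIntegrable_const
      intervalIntegral.intervalIntegrable_log', integral_log]
    simp
  have hdisj : Disjoint (Icc 0 c) (Ioc c 1) := disjoint_left.2 fun _ h₁ h₂ => h₂.1.not_ge h₁.2
  rw [← Icc_union_Ioc_eq_Icc hc0.le hc1, lintegral_union measurableSet_Ioc hdisj, hvanish,
    add_zero, Measure.restrict_congr_set Ioc_ae_eq_Icc.symm,
    ← ofReal_integral_eq_lintegral_ofReal, ← intervalIntegral.integral_of_le hc0.le, hint]
  · exact (intervalIntegrable_const.sub intervalIntegral.intervalIntegrable_log').1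
  · filter_upwards [ae_restrict_mem measurableSet_Ioc] with u hu
    exact sub_nonneg.2 (log_le_log hu.1 hu.2)

section UniformVariable

variable {Ω : Type*} [MeasurableSpace Ω] {μ : Measure Ω} {X : Ω → ℝ}

theorem aemeasurable_of_map_eq_uniform (hX : μ.map X = volume.restrict (Icc 0 1)) :
    AEMeasurable X μ :=
  .of_map_ne_zero <| by simp [hX]

theorem ae_pos_of_map_eq_uniform (hX : μ.map X = volume.restrict (Icc 0 1)) :
    ∀ᵐ ω ∂μ, 0 < X ω := by
  refine ae_of_ae_map (aemeasurable_of_map_eq_uniform hX) ?_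
  rw [hX, ← Measure.restrict_congr_set Ioc_ae_eq_Icc]
  filter_upwards [ae_restrict_mem measurableSet_Ioc] with u hu using hu.1

open Real in
theorem lintegral_ofReal_log_sub_log_of_map_eq_uniform
    (hX : μ.map X = volume.restrict (Icc 0 1)) {c : ℝ} (hc0 : 0 < c) (hc1 : c ≤ 1) :
    ∫⁻ ω, ENNReal.ofReal (log c - log (X ω)) ∂μ = ENNReal.ofReal c := by
  rw [← lintegral_map' (f := fun u => ENNReal.ofReal (log c - log u)) (by fun_prop)
    (aemeasurable_of_map_eq_uniform hX), hX, lintegral_ofReal_log_sub_log hc0 hc1]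

end UniformVariable

theorem measure_le_of_card_le_sum {Ω ι : Type*} [MeasurableSpace Ω] {μ : Measure Ω}
    [Fintype ι] [Nonempty ι] {f : ι → Ω → ℝ≥0∞} (hf : ∀ i, AEMeasurable (f i) μ)
    {a : ℝ≥0∞} (hfa : ∀ i, ∫⁻ ω, f i ω ∂μ ≤ a) {A : Set Ω}
    (hA : ∀ᵐ ω ∂μ, ω ∈ A → (Fintype.card ι : ℝ≥0∞) ≤ ∑ i, f i ω) :
    μ A ≤ a := by
  have hK : (Fintype.card ι : ℝ≥0∞) ≠ 0 := by simp
  refine (ENNReal.mul_le_mul_iff_right hK (ENNReal.natCast_ne_top _)).1 ?_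
  calc (Fintype.card ι : ℝ≥0∞) * μ A
      ≤ Fintype.card ι * μ {ω | (Fintype.card ι : ℝ≥0∞) ≤ ∑ i, f i ω} :=
        mul_le_mul_right (measure_mono_ae hA) _
    _ ≤ ∫⁻ ω, ∑ i, f i ω ∂μ := mul_meas_ge_le_lintegral₀ (by fun_prop) _
    _ = ∑ i, ∫⁻ ω, f i ω ∂μ := lintegral_finsetSum' _ fun i _ => hf i
    _ ≤ Fintype.card ι * a := (Finset.sum_le_sum fun i _ => hfa i).trans_eq (by simp)

open Real in
theorem sum_log_le_of_geomMean_le {ι : Type*} [Fintype ι] [Nonempty ι] {p : ι → ℝ}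
    (hp : ∀ i, 0 < p i) {t : ℝ}
    (h : (∏ i, p i) ^ (1 / (Fintype.card ι : ℝ)) ≤ t) :
    ∑ i, log (p i) ≤ Fintype.card ι * log t := by
  have hprod : 0 < ∏ i, p i := Finset.prod_pos fun i _ => hp i
  have hlog := log_le_log (rpow_pos_of_pos hprod _) h
  rw [log_rpow hprod, log_prod fun i _ => (hp i).ne'] at hlog
  have hK : (0 : ℝ) < Fintype.card ι := by exact_mod_cast Fintype.card_pos
  rwa [one_div, inv_mul_le_iff₀ hK] at hlog

open Real in
theorem card_le_sum_ofReal_log_sub_log_of_geomMean_le {ι : Type*} [Fintype ι] [Nonempty ι]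
    {p : ι → ℝ} (hp : ∀ i, 0 < p i) {t : ℝ} (ht : 0 < t)
    (h : (∏ i, p i) ^ (1 / (Fintype.card ι : ℝ)) ≤ t) :
    (Fintype.card ι : ℝ≥0∞) ≤ ∑ i, ENNReal.ofReal (log (exp 1 * t) - log (p i)) := by
  have hsum : (Fintype.card ι : ℝ) ≤ ∑ i, (log (exp 1 * t) - log (p i)) := by
    rw [Finset.sum_sub_distrib, Finset.sum_const, Finset.card_univ, nsmul_eq_mul,
      log_mul (exp_ne_zero 1) ht.ne', log_exp]
    linarith [sum_log_le_of_geomMean_le hp h]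
  calc (Fintype.card ι : ℝ≥0∞) = ENNReal.ofReal (Fintype.card ι) := by simp
    _ ≤ ENNReal.ofReal (∑ i, (log (exp 1 * t) - log (p i))) := ENNReal.ofReal_le_ofReal hsum
    _ ≤ _ := Finset.le_sum_of_subadditive _ ENNReal.ofReal_zero.le
      (fun _ _ => ENNReal.ofReal_add_le) _ _

theorem e_times_geometric_mean_valid_general
    {Ω : Type*} [MeasurableSpace Ω] (μ : Measure Ω) [IsProbabilityMeasure μ]
    (K : ℕ) (hK : 0 < K) (P : Fin K → Ω → ℝ)
    (hunif : ∀ k, Measure.map (P k) μ = volume.restrict (Set.Icc (0:ℝ) 1)) :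
    ∀ t ∈ Set.Ioo (0:ℝ) 1,
      μ {ω | (∏ k, P k ω) ^ (1 / (K:ℝ)) ≤ t} ≤ ENNReal.ofReal (Real.exp 1 * t) := by
  rintro t ⟨ht0, -⟩
  rcases le_or_gt 1 (Real.exp 1 * t) with het | het
  · exact prob_le_one.trans (by simpa using ENNReal.ofReal_le_ofReal het)
  have : Nonempty (Fin K) := Fin.pos_iff_nonempty.1 hK
  refine measure_le_of_card_le_sum (fun k => ?_)
    (fun k => (lintegral_ofReal_log_sub_log_of_map_eq_uniform (hunif k) (by positivity)
      het.le).le) ?_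
  · exact (aemeasurable_of_map_eq_uniform (hunif k)).log.const_sub _ |>.ennreal_ofReal
  filter_upwards [ae_all_iff.2 fun k => ae_pos_of_map_eq_uniform (hunif k)] with ω hpos hω
  exact card_le_sum_ofReal_log_sub_log_of_geomMean_le hpos ht0 (by simpa using hω)

/-- `e` times the geometric mean of arbitrarily dependent uniform p-values is a
valid p-value: `P((∏ Π_k)^{1/K} ≤ t) ≤ e·t` for all `t ∈ (0,1)`. -/
theorem e_times_geometric_mean_valid
    {Ω : Type*} [MeasurableSpace Ω] (μ : Measure Ω) [IsProbabilityMeasure μ]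
    (K : ℕ) (hK : 0 < K) (P : Fin K → Ω → ℝ)
    (hmeas : ∀ k, Measurable (P k))
    (h01 : ∀ k ω, P k ω ∈ Set.Icc (0:ℝ) 1)
    (hunif : ∀ k, Measure.map (P k) μ = volume.restrict (Set.Icc (0:ℝ) 1)) :
    ∀ t ∈ Set.Ioo (0:ℝ) 1,
      μ {ω | (∏ k, P k ω) ^ (1 / (K:ℝ)) ≤ t} ≤ ENNReal.ofReal (Real.exp 1 * t) :=
  e_times_geometric_mean_valid_general μ K hK P hunif
end

section
/- For every constant c > 0 there exists a joint law of Π_1,...,Π_K (K ≥ 2), each marginally Uniform(0,1), and some α ∈ (0,1) such that P(min{1, c·∏_{k=1}^K Π_k} ≤ α) > α. Hence no linear validification of the product fusion operator is valid under arbitrary dependence. -/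
open MeasureTheory Set

/-- No linear validification of the product fusion operator is valid under
arbitrary dependence: for every `c > 0` there is a joint law of `K` marginally
Uniform(0,1) random variables and some `α ∈ (0,1)` with
`P(min{1, c·∏ Π_k} ≤ α) > α`. -/
theorem no_linear_validification_product
    (K : ℕ) (hK : 2 ≤ K) (c : ℝ) (hc : 0 < c) :
    ∃ (Ω : Type) (_ : MeasurableSpace Ω) (μ : Measure Ω) (_ : IsProbabilityMeasure μ)
      (P : Fin K → Ω → ℝ),
      (∀ k, Measurable (P k)) ∧
      (∀ k, Measure.map (P k) μ = volume.restrict (Set.Icc (0:ℝ) 1)) ∧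
      ∃ α ∈ Set.Ioo (0:ℝ) 1,
        μ {ω | min 1 (c * ∏ k, P k ω) ≤ α} > ENNReal.ofReal α := by
  refine ⟨ℝ, inferInstance, volume.restrict (Set.Icc (0:ℝ) 1), ⟨by simp⟩,
    fun _ ω => ω, fun _ => measurable_id, fun _ => by simp [Measure.map_id], ?_⟩
  -- choose α
  set α : ℝ := min (1/2) (min c (1/c) / 2) with hα
  have hmin_pos : 0 < min c (1/c) := lt_min hc (by positivity)
  have hα0 : 0 < α := lt_min (by norm_num) (by positivity)
  have hα1 : α < 1 := lt_of_le_of_lt (min_le_left _ _) (by norm_num)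
  have hαc : α < c := by
    have h1 : α ≤ min c (1/c) / 2 := min_le_right _ _
    have h2 : min c (1/c) ≤ c := min_le_left _ _
    linarith
  have hαc' : α < 1/c := by
    have h1 : α ≤ min c (1/c) / 2 := min_le_right _ _
    have h2 : min c (1/c) ≤ 1/c := min_le_right _ _
    linarith
  refine ⟨α, ⟨hα0, hα1⟩, ?_⟩
  set t : ℝ := (α / c) ^ ((1:ℝ)/K) with ht
  have hKpos : (0:ℝ) < K := by positivity
  have hac_pos : 0 < α / c := by positivity
  have ht_pos : 0 < t := Real.rpow_pos_of_pos hac_pos _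
  have htK : t ^ K = α / c := by
    rw [ht, ← Real.rpow_natCast ((α / c) ^ ((1:ℝ)/K)) K, ← Real.rpow_mul hac_pos.le]
    rw [one_div, inv_mul_cancel₀ (by positivity : (K:ℝ) ≠ 0), Real.rpow_one]
  have ht1 : t ≤ 1 := by
    by_contra h
    push_neg at h
    have h1 : (1:ℝ) < t ^ K := one_lt_pow₀ h (by omega)
    have h2 : α / c < 1 := (div_lt_one hc).mpr hαc
    rw [htK] at h1
    linarith
  have hαt : α < t := by
    have hαK : α ^ K < α / c := by
      have h1 : α ^ K ≤ α ^ 2 := pow_le_pow_of_le_one hα0.le hα1.le hK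
      have h2 : α ^ 2 < α * (1/c) := by
        have := mul_lt_mul_of_pos_left hαc' hα0
        nlinarith
      have : α * (1/c) = α / c := by ring
      linarith
    by_contra h
    push_neg at h
    have : t ^ K ≤ α ^ K := pow_le_pow_left₀ ht_pos.le h K
    rw [htK] at this
    linarith
  -- lower bound the measure
  have hsub : Set.Icc (0:ℝ) t ⊆ {ω : ℝ | min 1 (c * ∏ _k : Fin K, ω) ≤ α} := by
    intro ω hω
    have hprod : (∏ _k : Fin K, ω) = ω ^ K := by
      simp [Finset.prod_const, Finset.card_univ]
    simp only [Set.mem_setOf_eq, hprod]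
    have hωK : ω ^ K ≤ t ^ K := pow_le_pow_left₀ hω.1 hω.2 K
    have : c * ω ^ K ≤ α := by
      rw [htK] at hωK
      calc c * ω ^ K ≤ c * (α / c) := by nlinarith
        _ = α := by field_simp
    exact le_trans (min_le_right _ _) this
  calc ENNReal.ofReal α < ENNReal.ofReal t := ENNReal.ofReal_lt_ofReal_iff ht_pos |>.mpr hαt
    _ = (volume.restrict (Set.Icc (0:ℝ) 1)) (Set.Icc 0 t) := by
        rw [Measure.restrict_apply measurableSet_Icc,
          Set.Icc_inter_Icc, Real.volume_Icc]
        simp [min_eq_left ht1, max_self]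
    _ ≤ _ := measure_mono hsub
end

section
/- Let X_1,...,X_K be exchangeable, non-negative, integrable random variables. Then for any a > 0, P(∃ k ≤ K : (1/k)∑_{i=1}^k X_i ≥ 1/a) ≤ a·E[X_1]. -/
open MeasureTheory Set

/-!
Push the law forward to `ν` on `Fin K → ℝ` and split the event according to the last index `k`
at which the running average reaches `c = 1/a`. This piece is determined by the running averages
of index `≥ k`, which are invariant under permuting the first `k + 1` coordinates, so by
exchangeability each of `x 0, …, x k` has the same integral over it. Hence `∫ x 0` over the piece
equals the integral of the `k`-th running average, which is at least `c` times its measure.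
Summing over the disjoint pieces and using `x 0 ≥ 0` off the event gives `c · ν(E) ≤ E[x 0]`.
-/

/-- The law of an exchangeable family of real random variables. -/
def IsExchangeable {ι : Type*} (ν : Measure (ι → ℝ)) : Prop :=
  ∀ σ : Equiv.Perm ι, ν.map (fun x => x ∘ σ) = ν

theorem measurable_comp_perm {ι : Type*} (σ : Equiv.Perm ι) :
    Measurable fun x : ι → ℝ => x ∘ σ :=
  measurable_pi_lambda _ fun i => measurable_pi_apply (σ i)

theorem setIntegral_apply_perm_eq {ι : Type*} {ν : Measure (ι → ℝ)} {σ : Equiv.Perm ι}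
    (hν : ν.map (fun x => x ∘ σ) = ν) {B : Set (ι → ℝ)} (hB : MeasurableSet B)
    (hBσ : (fun x => x ∘ σ) ⁻¹' B = B) (i : ι) :
    ∫ x in B, x (σ i) ∂ν = ∫ x in B, x i ∂ν := by
  calc ∫ x in B, x (σ i) ∂ν = ∫ x in (fun x => x ∘ σ) ⁻¹' B, (x ∘ σ) i ∂ν := by rw [hBσ]; rfl
    _ = ∫ x in B, x i ∂(ν.map fun x => x ∘ σ) :=
      (setIntegral_map hB (measurable_pi_apply i).aestronglyMeasurable
        (measurable_comp_perm σ).aemeasurable).symm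
    _ = ∫ x in B, x i ∂ν := by rw [hν]

theorem isExchangeable_map {ι Ω : Type*} [MeasurableSpace Ω] {μ : Measure Ω}
    {X : ι → Ω → ℝ} (hmeas : ∀ i, Measurable (X i))
    (hexch : ∀ σ : Equiv.Perm ι,
      μ.map (fun ω i => X (σ i) ω) = μ.map (fun ω i => X i ω)) :
    IsExchangeable (μ.map fun ω i => X i ω) := fun σ => by
  rw [Measure.map_map (measurable_comp_perm σ) (measurable_pi_lambda _ hmeas)]
  exact hexch σ

section RunningAverage

variable {K : ℕ}

noncomputable def runningAvg (k : Fin K) (x : Fin K → ℝ) : ℝ :=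
  (∑ i ∈ Finset.Iic k, x i) / ((k : ℕ) + 1)

theorem measurable_runningAvg (k : Fin K) : Measurable (runningAvg k) :=
  (Finset.measurable_sum _ fun i _ => measurable_pi_apply i).div_const _

theorem runningAvg_comp_swap {i j k : Fin K} (hi : i ≤ k) (hj : j ≤ k) (x : Fin K → ℝ) :
    runningAvg k (x ∘ Equiv.swap i j) = runningAvg k x := by
  unfold runningAvg
  congr 1
  refine Equiv.Perm.sum_comp _ _ _ fun m hm => ?_
  rw [Finset.coe_Iic, Set.mem_Iic]
  rcases (Equiv.swap_apply_ne_self_iff.1 hm).2 with rfl | rfl <;> assumption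

def lastCrossing (c : ℝ) (k : Fin K) : Set (Fin K → ℝ) :=
  {x | c ≤ runningAvg k x ∧ ∀ j, k < j → runningAvg j x < c}

theorem measurableSet_lastCrossing (c : ℝ) (k : Fin K) : MeasurableSet (lastCrossing c k) := by
  have hset : lastCrossing c k = {x | c ≤ runningAvg k x} ∩
      ⋂ j, ⋂ (_ : k < j), {x | runningAvg j x < c} := by
    ext x
    simp [lastCrossing]
  rw [hset]
  exact (measurableSet_le measurable_const (measurable_runningAvg k)).inter <|
    MeasurableSet.iInter fun j => MeasurableSet.iInter fun _ =>
      measurableSet_lt (measurable_runningAvg j) measurable_const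

theorem preimage_comp_swap_lastCrossing {i j k : Fin K} (hi : i ≤ k) (hj : j ≤ k) (c : ℝ) :
    (fun x => x ∘ Equiv.swap i j) ⁻¹' lastCrossing c k = lastCrossing c k := by
  ext x
  have hinv : ∀ l, k ≤ l → runningAvg l (x ∘ Equiv.swap i j) = runningAvg l x :=
    fun l hl => runningAvg_comp_swap (hi.trans hl) (hj.trans hl) x
  simp only [lastCrossing, mem_preimage, mem_ofPred_eq, hinv k le_rfl]
  exact and_congr_right fun _ => forall_congr' fun l => imp_congr_right fun hl => by
    rw [hinv l hl.le]

theorem pairwise_disjoint_lastCrossing (c : ℝ) :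
    Pairwise (Function.onFun Disjoint (lastCrossing (K := K) c)) := by
  intro k l hkl
  rcases hkl.lt_or_gt with h | h
  · exact disjoint_left.2 fun x hk hl => (hk.2 l h).not_ge hl.1
  · exact disjoint_left.2 fun x hk hl => (hl.2 k h).not_ge hk.1

theorem iUnion_lastCrossing (c : ℝ) :
    ⋃ k, lastCrossing c k = {x : Fin K → ℝ | ∃ k, c ≤ runningAvg k x} := by
  ext x
  simp only [mem_iUnion, lastCrossing, mem_ofPred_eq]
  constructor
  · rintro ⟨k, hk, -⟩
    exact ⟨k, hk⟩
  · rintro ⟨k, hk⟩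
    obtain ⟨m, hm, hmax⟩ :=
      Set.exists_max_image {k | c ≤ runningAvg k x} id (Set.toFinite _) ⟨k, hk⟩
    exact ⟨m, hm, fun j hj => not_le.1 fun hjc => (hmax j hjc).not_gt hj⟩

variable {ν : Measure (Fin K → ℝ)}

theorem integrable_runningAvg (hint : ∀ i, Integrable (fun x => x i) ν) (k : Fin K) :
    Integrable (runningAvg k) ν :=
  (integrable_finsetSum _ fun i _ => hint i).div_const _

theorem setIntegral_lastCrossing_runningAvg (hν : IsExchangeable ν)
    (hint : ∀ i, Integrable (fun x => x i) ν) {i k : Fin K} (hik : i ≤ k) (c : ℝ) :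
    ∫ x in lastCrossing c k, runningAvg k x ∂ν = ∫ x in lastCrossing c k, x i ∂ν := by
  have hcoord : ∀ j ∈ Finset.Iic k,
      ∫ x in lastCrossing c k, x j ∂ν = ∫ x in lastCrossing c k, x i ∂ν := by
    intro j hj
    have hswap := setIntegral_apply_perm_eq (hν (Equiv.swap j i)) (measurableSet_lastCrossing c k)
      (preimage_comp_swap_lastCrossing (Finset.mem_Iic.1 hj) hik c) j
    rwa [Equiv.swap_apply_left, eq_comm] at hswap
  unfold runningAvg
  rw [integral_div, integral_finsetSum _ fun j _ => (hint j).integrableOn,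
    Finset.sum_congr rfl hcoord, Finset.sum_const, Fin.card_Iic, nsmul_eq_mul]
  push_cast
  field_simp

theorem mul_measureReal_exists_runningAvg_ge_le [IsFiniteMeasure ν] (hν : IsExchangeable ν)
    (hint : ∀ i, Integrable (fun x => x i) ν) {i : Fin K} (hi : ∀ k, i ≤ k)
    (hnonneg : 0 ≤ᵐ[ν] fun x => x i) (c : ℝ) :
    c * ν.real {x | ∃ k, c ≤ runningAvg k x} ≤ ∫ x, x i ∂ν := by
  have hpiece : ∀ k, c * ν.real (lastCrossing c k) ≤ ∫ x in lastCrossing c k, x i ∂ν := by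
    intro k
    rw [← setIntegral_lastCrossing_runningAvg hν hint (hi k)]
    exact setIntegral_ge_of_const_le_real (measurableSet_lastCrossing c k) (measure_ne_top _ _)
      (fun x hx => hx.1) (integrable_runningAvg hint k).integrableOn
  rw [← iUnion_lastCrossing,
    measureReal_iUnion_fintype (pairwise_disjoint_lastCrossing c) (measurableSet_lastCrossing c),
    Finset.mul_sum]
  calc ∑ k, c * ν.real (lastCrossing c k) ≤ ∑ k, ∫ x in lastCrossing c k, x i ∂ν :=
        Finset.sum_le_sum fun k _ => hpiece k
    _ = ∫ x in ⋃ k, lastCrossing c k, x i ∂ν :=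
        (integral_iUnion_fintype (measurableSet_lastCrossing c) (pairwise_disjoint_lastCrossing c)
          fun _ => (hint i).integrableOn).symm
    _ ≤ ∫ x, x i ∂ν := setIntegral_le_integral (hint i) hnonneg

end RunningAverage

/-- Exchangeable Markov inequality: if `X_1,...,X_K` are exchangeable,
non-negative, integrable random variables, then for any `a > 0`,
`P(∃ k ≤ K : (1/k) ∑_{i=1}^k X_i ≥ 1/a) ≤ a · E[X_1]`. -/
theorem exchangeable_markov_inequality
    {Ω : Type*} [MeasurableSpace Ω] (μ : Measure Ω) [IsProbabilityMeasure μ]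
    (K : ℕ) (hK : 0 < K) (X : Fin K → Ω → ℝ)
    (hmeas : ∀ k, Measurable (X k))
    (hnonneg : ∀ k ω, 0 ≤ X k ω)
    (hint : ∀ k, Integrable (X k) μ)
    (hexch : ∀ σ : Equiv.Perm (Fin K),
      Measure.map (fun ω => fun i => X (σ i) ω) μ
        = Measure.map (fun ω => fun i => X i ω) μ) :
    ∀ a > (0:ℝ),
      μ {ω | ∃ k : Fin K, (∑ i ∈ Finset.Iic k, X i ω) / ((k:ℕ) + 1) ≥ 1 / a}
        ≤ ENNReal.ofReal (a * ∫ ω, X ⟨0, hK⟩ ω ∂μ) := by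
  intro a ha
  set V : Ω → Fin K → ℝ := fun ω i => X i ω
  have hV : Measurable V := measurable_pi_lambda _ hmeas
  have hintν : ∀ i, Integrable (fun x => x i) (μ.map V) := fun i =>
    (integrable_map_measure (measurable_pi_apply i).aestronglyMeasurable hV.aemeasurable).2 (hint i)
  have hnonnegν : 0 ≤ᵐ[μ.map V] fun x => x ⟨0, hK⟩ :=
    (ae_map_iff hV.aemeasurable (measurableSet_le measurable_const (measurable_pi_apply _))).2
      (ae_of_all _ fun ω => hnonneg _ ω)
  have hE : MeasurableSet {x : Fin K → ℝ | ∃ k, 1 / a ≤ runningAvg k x} :=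
    iUnion_lastCrossing (1 / a) ▸ MeasurableSet.iUnion (measurableSet_lastCrossing (1 / a))
  have hbound := mul_measureReal_exists_runningAvg_ge_le
    (isExchangeable_map hmeas hexch) hintν
    (i := ⟨0, hK⟩) (fun k => Nat.zero_le k) hnonnegν (1 / a)
  rw [measureReal_def, Measure.map_apply hV hE,
    integral_map hV.aemeasurable (measurable_pi_apply _).aestronglyMeasurable] at hbound
  calc μ {ω | ∃ k : Fin K, (∑ i ∈ Finset.Iic k, X i ω) / ((k:ℕ) + 1) ≥ 1 / a}
      = ENNReal.ofReal (μ (V ⁻¹' {x | ∃ k, 1 / a ≤ runningAvg k x})).toReal :=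
        (ENNReal.ofReal_toReal (measure_ne_top _ _)).symm
    _ ≤ ENNReal.ofReal (a * ∫ ω, X ⟨0, hK⟩ ω ∂μ) :=
        ENNReal.ofReal_le_ofReal <| by
          simpa only [← mul_assoc, mul_one_div_cancel ha.ne', one_mul] using
            mul_le_mul_of_nonneg_left hbound ha.le
end

section
/- Let Π_1,...,Π_K be exchangeable [0,1]-valued random variables each marginally Uniform(0,1). Then for all t ∈ (0,1), P(∃ k ≤ K : (1/k)∑_{i=1}^k Π_i ≤ t) ≤ 1/(2(1-t)). -/
/-!
Put `X_i = 1 - Π_i ≥ 0` (mean `1/2`) and `a = 1 - t`; the event is that some prefix average of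
the `X_i` is at least `a`. By exchangeability, each of the `K` cyclic rotations of `(X_i)` gives
an event of the same probability, so `K · P(event)` is the expected number of starting points `c`
from which some cyclic window has average `≥ a`. For the rotation `c ↦ c + 1` of `Fin K`, the
maximal ergodic lemma bounds that number by `(∑ X_i) / a` pointwise; taking expectations gives
`K · P(event) ≤ K / (2a)`.
-/

open MeasureTheory Finset
open scoped ENNReal

/-- The maximal ergodic lemma for a permutation of a finite set, by Garsia's argument: with
`M j = max_{n ≤ N} S_n(j)` one has `M ≤ 1_{good} · y + M ∘ T`, and `∑ M ∘ T = ∑ M`. -/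
theorem sum_filter_exists_birkhoffSum_nonneg {α : Type*} [Fintype α] (T : α ≃ α) (y : α → ℝ)
    (N : ℕ) : 0 ≤ ∑ j ∈ univ.filter (fun j => ∃ n < N, 0 ≤ birkhoffSum T y (n + 1) j), y j := by
  classical
  set good : α → Prop := fun j => ∃ n < N, 0 ≤ birkhoffSum T y (n + 1) j
  let M : α → ℝ := fun j => (range (N + 1)).sup' nonempty_range_add_one (birkhoffSum T y · j)
  have hM_nonneg (j : α) : 0 ≤ M j :=
    (birkhoffSum_zero T y j).symm.le.trans (le_sup' (birkhoffSum T y · j) (mem_range.2 N.succ_pos))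
  have hM_succ (j : α) {n : ℕ} (hn : n < N) : birkhoffSum T y (n + 1) j ≤ y j + M (T j) := by
    rw [birkhoffSum_succ']
    exact add_le_add_right (le_sup' (birkhoffSum T y · (T j)) (mem_range.2 (by omega))) _
  have hM_le (j : α) : M j ≤ (if good j then y j else 0) + M (T j) := by
    refine sup'_le _ _ fun n hn => ?_
    split_ifs with hj
    · obtain ⟨m, hm, hm0⟩ := hj
      rcases n with _ | n
      · exact (birkhoffSum_zero T y j).le.trans (hm0.trans (hM_succ j hm))
      · exact hM_succ j (by simpa using hn)
    · simp only [good, not_exists, not_and, not_le] at hj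
      rcases n with _ | n
      · simpa using hM_nonneg (T j)
      · linarith [hj n (by simpa using hn), hM_nonneg (T j)]
  have hsum := sum_le_sum fun j (_ : j ∈ univ) => hM_le j
  rw [sum_add_distrib, T.sum_comp M, ← sum_filter] at hsum
  linarith

open Fin.NatCast in
theorem Fin.birkhoffSum_add_one {K : ℕ} [NeZero K] {M : Type*} [AddCommMonoid M] (y : Fin K → M)
    (k c : Fin K) : birkhoffSum (· + 1) y (k + 1) c = ∑ i ∈ Iic k, y (i + c) := by
  rw [birkhoffSum, Nat.range_succ_eq_Iic, ← Fin.map_valEmbedding_Iic, sum_map]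
  refine sum_congr rfl fun i _ => ?_
  simp only [valEmbedding_apply, add_right_iterate_apply, add_comm]
  rw [nsmul_one, Fin.cast_val_eq_self]

theorem Fin.mul_card_filter_exists_le_sum_Iic_le {K : ℕ} [NeZero K] (x : Fin K → ℝ)
    (hx : ∀ i, 0 ≤ x i) (a : ℝ) :
    a * #{c | ∃ k : Fin K, a * ((k : ℕ) + 1) ≤ ∑ i ∈ Iic k, x (i + c)} ≤ ∑ i, x i := by
  have key := sum_filter_exists_birkhoffSum_nonneg (Equiv.addRight 1) (fun i => x i - a) K
  have hwindow (c k : Fin K) : birkhoffSum (Equiv.addRight 1) (fun i => x i - a) (k + 1) c =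
      ∑ i ∈ Iic k, x (i + c) - a * ((k : ℕ) + 1) := by
    rw [Equiv.coe_addRight, Fin.birkhoffSum_add_one, sum_sub_distrib, Finset.sum_const,
      Fin.card_Iic, nsmul_eq_mul, mul_comm]
    push_cast
    ring
  have hgood (c : Fin K) :
      (∃ n < K, 0 ≤ birkhoffSum (Equiv.addRight 1) (fun i => x i - a) (n + 1) c) ↔
        ∃ k : Fin K, a * ((k : ℕ) + 1) ≤ ∑ i ∈ Iic k, x (i + c) := by
    constructor
    · rintro ⟨n, hn, h⟩
      exact ⟨⟨n, hn⟩, by linarith [hwindow c ⟨n, hn⟩]⟩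
    · rintro ⟨k, hk⟩
      exact ⟨k, k.isLt, by linarith [hwindow c k]⟩
  simp only [hgood] at key
  rw [sum_sub_distrib, Finset.sum_const, nsmul_eq_mul', sub_nonneg] at key
  exact key.trans (sum_le_univ_sum_of_nonneg hx)

def Exchangeable {Ω ι : Type*} [MeasurableSpace Ω] (μ : Measure Ω) (X : ι → Ω → ℝ) : Prop :=
  ∀ σ : Equiv.Perm ι, μ.map (fun ω i => X (σ i) ω) = μ.map (fun ω i => X i ω)

namespace Exchangeable

variable {Ω ι : Type*} [MeasurableSpace Ω] {μ : Measure Ω} {X : ι → Ω → ℝ}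

theorem comp (hX : Exchangeable μ X) (hmeas : ∀ i, Measurable (X i)) {f : ℝ → ℝ}
    (hf : Measurable f) : Exchangeable μ (fun i ω => f (X i ω)) := by
  intro σ
  have hg : Measurable fun (x : ι → ℝ) i => f (x i) :=
    measurable_pi_lambda _ fun i => hf.comp (measurable_pi_apply i)
  change μ.map ((fun x i => f (x i)) ∘ fun ω i => X (σ i) ω) =
    μ.map ((fun x i => f (x i)) ∘ fun ω i => X i ω)
  rw [← Measure.map_map hg (measurable_pi_lambda _ fun i => hmeas (σ i)), hX σ,
    Measure.map_map hg (measurable_pi_lambda _ hmeas)]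

theorem measure_preimage_eq (hX : Exchangeable μ X) (hmeas : ∀ i, Measurable (X i))
    (σ : Equiv.Perm ι) {A : Set (ι → ℝ)} (hA : MeasurableSet A) :
    μ ((fun ω i => X (σ i) ω) ⁻¹' A) = μ ((fun ω i => X i ω) ⁻¹' A) := by
  rw [← Measure.map_apply (measurable_pi_lambda _ fun i => hmeas (σ i)) hA, hX σ,
    Measure.map_apply (measurable_pi_lambda _ hmeas) hA]

/-- The exchangeable Markov inequality. `E c` is the prefix event of the rotated vector
`(X (i + c))_i`. -/
theorem ofReal_mul_measure_exists_le_sum_Iic_le {K : ℕ} [NeZero K] {X : Fin K → Ω → ℝ}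
    (hX : Exchangeable μ X) (hmeas : ∀ i, Measurable (X i)) (hnonneg : ∀ i ω, 0 ≤ X i ω)
    (a : ℝ) :
    ENNReal.ofReal a * (K * μ {ω | ∃ k : Fin K, a * ((k : ℕ) + 1) ≤ ∑ i ∈ Iic k, X i ω}) ≤
      ∑ i, ∫⁻ ω, ENNReal.ofReal (X i ω) ∂μ := by
  set A : Set (Fin K → ℝ) := {x | ∃ k : Fin K, a * ((k : ℕ) + 1) ≤ ∑ i ∈ Iic k, x i}
  have hA : MeasurableSet A := by
    simp only [A, Set.ofPred_exists]
    exact .iUnion fun k => measurableSet_le measurable_const (by fun_prop)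
  set E : Fin K → Set Ω := fun c => (fun ω i => X (i + c) ω) ⁻¹' A
  have hE (c : Fin K) : MeasurableSet (E c) := (measurable_pi_lambda _ fun i => hmeas (i + c)) hA
  have hEc (c : Fin K) : μ (E c) = μ ((fun ω i => X i ω) ⁻¹' A) :=
    hX.measure_preimage_eq hmeas (Equiv.addRight c) hA
  set good : Ω → Finset (Fin K) := fun ω =>
    {c | ∃ k : Fin K, a * ((k : ℕ) + 1) ≤ ∑ i ∈ Iic k, X (i + c) ω}
  have hcount (ω : Ω) : ∑ c, (E c).indicator 1 ω = (#(good ω) : ℝ≥0∞) := by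
    classical
    simp only [good, natCast_card_filter, Set.indicator_apply, Pi.one_apply, E, A,
      Set.mem_preimage, Set.mem_ofPred_eq]
  have hpoint (ω : Ω) : ENNReal.ofReal a * #(good ω) ≤ ∑ i, ENNReal.ofReal (X i ω) := by
    rw [← ENNReal.ofReal_natCast, ← ENNReal.ofReal_mul' (Nat.cast_nonneg _),
      ← ENNReal.ofReal_sum_of_nonneg fun i _ => hnonneg i ω]
    exact ENNReal.ofReal_le_ofReal
      (Fin.mul_card_filter_exists_le_sum_Iic_le (X · ω) (hnonneg · ω) a)
  calc ENNReal.ofReal a * (K * μ ((fun ω i => X i ω) ⁻¹' A))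
      = ENNReal.ofReal a * ∑ c, μ (E c) := by
        simp only [hEc, Finset.sum_const, card_univ, Fintype.card_fin, nsmul_eq_mul]
    _ = ∫⁻ ω, ENNReal.ofReal a * #(good ω) ∂μ := by
        rw [lintegral_const_mul' _ _ ENNReal.ofReal_ne_top]
        simp only [← hcount, ← lintegral_indicator_one (hE _)]
        rw [lintegral_finsetSum _ fun c _ => measurable_one.indicator (hE c)]
    _ ≤ ∫⁻ ω, ∑ i, ENNReal.ofReal (X i ω) ∂μ := lintegral_mono hpoint
    _ = ∑ i, ∫⁻ ω, ENNReal.ofReal (X i ω) ∂μ :=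
        lintegral_finsetSum _ fun i _ => (hmeas i).ennreal_ofReal

end Exchangeable

theorem lintegral_Icc_ofReal_one_sub :
    ∫⁻ y in Set.Icc (0 : ℝ) 1, ENNReal.ofReal (1 - y) = ENNReal.ofReal (1 / 2) := by
  rw [← ofReal_integral_eq_lintegral_ofReal (f := fun y => 1 - y)
    (continuous_const.sub continuous_id).integrableOn_Icc
    ((ae_restrict_iff' measurableSet_Icc).2 (.of_forall fun y hy => sub_nonneg.2 hy.2)),
    integral_Icc_eq_integral_Ioc, ← intervalIntegral.integral_of_le zero_le_one,
    intervalIntegral.integral_sub intervalIntegrable_const intervalIntegral.intervalIntegrable_id]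
  norm_num

theorem Fin.sum_Iic_div_le_iff {K : ℕ} (p : Fin K → ℝ) (k : Fin K) (t : ℝ) :
    (∑ i ∈ Iic k, p i) / ((k : ℕ) + 1) ≤ t ↔ (1 - t) * ((k : ℕ) + 1) ≤ ∑ i ∈ Iic k, (1 - p i) := by
  rw [div_le_iff₀ (by positivity), sum_sub_distrib, Finset.sum_const, Fin.card_Iic,
    nsmul_eq_mul, Nat.cast_add_one, mul_one]
  constructor <;> intro h <;> linarith

theorem exchangeable_prefix_average_bound_general
    {Ω : Type*} [MeasurableSpace Ω] (μ : Measure Ω)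
    (K : ℕ) (hK : 0 < K) (P : Fin K → Ω → ℝ)
    (hmeas : ∀ k, Measurable (P k))
    (h01 : ∀ k ω, P k ω ∈ Set.Icc (0:ℝ) 1)
    (hunif : ∀ k, Measure.map (P k) μ = volume.restrict (Set.Icc (0:ℝ) 1))
    (hexch : ∀ σ : Equiv.Perm (Fin K),
      Measure.map (fun ω => fun i => P (σ i) ω) μ
        = Measure.map (fun ω => fun i => P i ω) μ) :
    ∀ t ∈ Set.Ioo (0:ℝ) 1,
      μ {ω | ∃ k : Fin K, (∑ i ∈ Finset.Iic k, P i ω) / ((k:ℕ) + 1) ≤ t}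
        ≤ ENNReal.ofReal (1 / (2 * (1 - t))) := by
  intro t ht
  have : NeZero K := ⟨hK.ne'⟩
  have hg : Measurable fun y : ℝ => 1 - y := measurable_const.sub measurable_id
  have hmean (i : Fin K) : ∫⁻ ω, ENNReal.ofReal (1 - P i ω) ∂μ = ENNReal.ofReal (1 / 2) := by
    rw [← lintegral_map hg.ennreal_ofReal (hmeas i), hunif i, lintegral_Icc_ofReal_one_sub]
  have key := Exchangeable.ofReal_mul_measure_exists_le_sum_Iic_le
    (Exchangeable.comp hexch hmeas hg) (fun i => hg.comp (hmeas i))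
    (fun i ω => sub_nonneg.2 (h01 i ω).2) (1 - t)
  simp only [hmean, Finset.sum_const, card_univ, Fintype.card_fin, nsmul_eq_mul,
    ← Fin.sum_Iic_div_le_iff, mul_left_comm (ENNReal.ofReal _) (K : ℝ≥0∞)] at key
  have hK0 : (K : ℝ≥0∞) ≠ 0 := by exact_mod_cast hK.ne'
  rwa [ENNReal.mul_le_mul_iff_right hK0 (ENNReal.natCast_ne_top K), mul_comm,
    ← ENNReal.le_div_iff_mul_le (.inl (by simpa using ht.2)) (.inl ENNReal.ofReal_ne_top),
    ← ENNReal.ofReal_div_of_pos (by linarith [ht.2]), div_div] at key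

/-- For exchangeable, marginally Uniform(0,1) random variables `Π_1,...,Π_K`,
`P(∃ k ≤ K : (1/k) ∑_{i=1}^k Π_i ≤ t) ≤ 1/(2(1-t))` for all `t ∈ (0,1)`. -/
theorem exchangeable_prefix_average_bound
    {Ω : Type*} [MeasurableSpace Ω] (μ : Measure Ω) [IsProbabilityMeasure μ]
    (K : ℕ) (hK : 0 < K) (P : Fin K → Ω → ℝ)
    (hmeas : ∀ k, Measurable (P k))
    (h01 : ∀ k ω, P k ω ∈ Set.Icc (0:ℝ) 1)
    (hunif : ∀ k, Measure.map (P k) μ = volume.restrict (Set.Icc (0:ℝ) 1))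
    (hexch : ∀ σ : Equiv.Perm (Fin K),
      Measure.map (fun ω => fun i => P (σ i) ω) μ
        = Measure.map (fun ω => fun i => P i ω) μ) :
    ∀ t ∈ Set.Ioo (0:ℝ) 1,
      μ {ω | ∃ k : Fin K, (∑ i ∈ Finset.Iic k, P i ω) / ((k:ℕ) + 1) ≤ t}
        ≤ ENNReal.ofReal (1 / (2 * (1 - t))) :=
  exchangeable_prefix_average_bound_general μ K hK P hmeas h01 hunif hexch
end
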